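/- arXiv:2602.13561 — 5 statements merged into one kernel-verified Lean document; each statement's English description precedes it below -/
import Mathlib

section
/- Let α ∈ (1/2,1), H ∈ (1/2,1) and ϱ > 0. Then M_{ϱ,α,H} := ∫₀^∞ ∫₀^∞ e^(−ϱs)·e^(−ϱr)·s^(α−1)·r^(α−1)·|s−r|^(2H−2) ds dr < ∞. -/
open MeasureTheory Filter Topology

open scoped ENNReal

set_option maxHeartbeats 1000000

/-- `|u| ^ γ` is integrable on `[-1, 1]` when `γ > -1`. -/
lemma Maux_absrpow_lt_top {γ : ℝ} (hγ : -1 < γ) :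
    ∫⁻ u in Set.Icc (-1 : ℝ) 1, ENNReal.ofReal (|u| ^ γ) < ⊤ := by
  have h01 : IntervalIntegrable (fun x : ℝ => x ^ γ) volume 0 1 :=
    intervalIntegral.intervalIntegrable_rpow' hγ
  have h1 : IntegrableOn (fun u : ℝ => |u| ^ γ) (Set.Icc 0 1) := by
    have := (intervalIntegrable_iff' (μ := volume)).mp h01
    rw [Set.uIcc_of_le (by norm_num : (0:ℝ) ≤ 1)] at this
    exact this.congr_fun (fun x hx => by
      rw [abs_of_nonneg hx.1]) measurableSet_Icc
  have h2 : IntegrableOn (fun u : ℝ => |u| ^ γ) (Set.Icc (-1) 0) := by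
    have hneg : IntervalIntegrable (fun x : ℝ => (-x) ^ γ) volume (-0) (-1) :=
      (IntervalIntegrable.iff_comp_neg (f := fun x : ℝ => x ^ γ) (by simp)).mp h01
    have := (intervalIntegrable_iff' (μ := volume)).mp hneg
    rw [neg_zero, Set.uIcc_comm, Set.uIcc_of_le (by norm_num : (-1:ℝ) ≤ 0)] at this
    exact this.congr_fun (fun x hx => by
      rw [abs_of_nonpos hx.2]) measurableSet_Icc
  have h3 : IntegrableOn (fun u : ℝ => |u| ^ γ) (Set.Icc (-1) 1) := by
    have := h2.union h1
    rwa [Set.Icc_union_Icc_eq_Icc (by norm_num : (-1:ℝ) ≤ 0) (by norm_num : (0:ℝ) ≤ 1)] at this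
  exact h3.setLIntegral_lt_top

/-- Finiteness of `∫₀^∞ e^{-ϱ s} s ^ β ds` for `β > -1`. -/
lemma Maux_exp_rpow_lt_top {ϱ β : ℝ} (hϱ : 0 < ϱ) (hβ : -1 < β) :
    ∫⁻ s in Set.Ioi (0 : ℝ), ENNReal.ofReal (Real.exp (-ϱ * s) * s ^ β) < ⊤ := by
  have h := integrableOn_rpow_mul_exp_neg_mul_rpow hβ (p := 1) one_pos hϱ
  have h2 : IntegrableOn (fun s : ℝ => Real.exp (-ϱ * s) * s ^ β) (Set.Ioi 0) :=
    h.congr_fun (fun x _ => by dsimp only; rw [Real.rpow_one]; ring) measurableSet_Ioi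
  exact h2.setLIntegral_lt_top

/-- Uniform bound for the inner integral `∫₀^∞ e^{-ϱ r} |s - r| ^ γ dr`. -/
lemma Maux_inner_bound {ϱ γ : ℝ} (hϱ : 0 < ϱ) (hγ1 : -1 < γ) (hγ0 : γ ≤ 0) (s : ℝ) :
    ∫⁻ r in Set.Ioi (0 : ℝ), ENNReal.ofReal (Real.exp (-ϱ * r) * |s - r| ^ γ) ≤
      (∫⁻ u in Set.Icc (-1 : ℝ) 1, ENNReal.ofReal (|u| ^ γ)) +
        ∫⁻ r in Set.Ioi (0 : ℝ), ENNReal.ofReal (Real.exp (-ϱ * r)) := by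
  set A : Set ℝ := Set.Icc (s - 1) (s + 1) with hA
  have hsub : Set.Ioi (0:ℝ) ⊆ (Set.Ioi 0 ∩ A) ∪ (Set.Ioi 0 \ A) := by
    intro x hx
    by_cases h : x ∈ A
    · exact Or.inl ⟨hx, h⟩
    · exact Or.inr ⟨hx, h⟩
  have hnear : ∫⁻ r in Set.Ioi 0 ∩ A, ENNReal.ofReal (Real.exp (-ϱ * r) * |s - r| ^ γ)
      ≤ ∫⁻ u in Set.Icc (-1 : ℝ) 1, ENNReal.ofReal (|u| ^ γ) := by
          calc ∫⁻ r in Set.Ioi 0 ∩ A, ENNReal.ofReal (Real.exp (-ϱ * r) * |s - r| ^ γ)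
              ≤ ∫⁻ r in Set.Ioi 0 ∩ A, ENNReal.ofReal (|s - r| ^ γ) := by
                refine setLIntegral_mono' (measurableSet_Ioi.inter measurableSet_Icc)
                  (fun r hr => ENNReal.ofReal_le_ofReal ?_)
                have hr0 : (0:ℝ) < r := hr.1
                have h1 : Real.exp (-ϱ * r) ≤ 1 := by
                  rw [Real.exp_le_one_iff]
                  nlinarith
                have h2 : (0:ℝ) ≤ |s - r| ^ γ := Real.rpow_nonneg (abs_nonneg _) _
                nlinarith [Real.exp_pos (-ϱ * r)]
            _ ≤ ∫⁻ r in A, ENNReal.ofReal (|s - r| ^ γ) :=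
                lintegral_mono_set Set.inter_subset_right
            _ = ∫⁻ r, A.indicator (fun r => ENNReal.ofReal (|s - r| ^ γ)) r :=
                (lintegral_indicator measurableSet_Icc _).symm
            _ = ∫⁻ r, (Set.Icc (-1:ℝ) 1).indicator
                  (fun u => ENNReal.ofReal (|u| ^ γ)) (r - s) := by
                refine lintegral_congr fun r => ?_
                by_cases h : r - s ∈ Set.Icc (-1:ℝ) 1
                · rw [Set.indicator_of_mem h, Set.indicator_of_mem]
                  · rw [abs_sub_comm]
                  · rw [hA, Set.mem_Icc] at *
                    constructor <;> [linarith [h.1]; linarith [h.2]]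
                · rw [Set.indicator_of_notMem h, Set.indicator_of_notMem]
                  rw [hA, Set.mem_Icc] at *
                  intro hc
                  exact h ⟨by linarith [hc.1], by linarith [hc.2]⟩
            _ = ∫⁻ u, (Set.Icc (-1:ℝ) 1).indicator
                  (fun u => ENNReal.ofReal (|u| ^ γ)) u :=
                lintegral_sub_right_eq_self _ s
            _ = ∫⁻ u in Set.Icc (-1:ℝ) 1, ENNReal.ofReal (|u| ^ γ) :=
                lintegral_indicator measurableSet_Icc _
  have hfar : ∫⁻ r in Set.Ioi 0 \ A, ENNReal.ofReal (Real.exp (-ϱ * r) * |s - r| ^ γ)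
      ≤ ∫⁻ r in Set.Ioi (0 : ℝ), ENNReal.ofReal (Real.exp (-ϱ * r)) := by
          calc ∫⁻ r in Set.Ioi 0 \ A, ENNReal.ofReal (Real.exp (-ϱ * r) * |s - r| ^ γ)
              ≤ ∫⁻ r in Set.Ioi 0 \ A, ENNReal.ofReal (Real.exp (-ϱ * r)) := by
                refine setLIntegral_mono' (measurableSet_Ioi.diff measurableSet_Icc)
                  (fun r hr => ENNReal.ofReal_le_ofReal ?_)
                have habs : (1:ℝ) ≤ |s - r| := by
                  have := hr.2
                  rw [hA, Set.mem_Icc] at this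
                  push_neg at this
                  rcases lt_or_ge r (s - 1) with h | h
                  · rw [abs_of_nonneg (by linarith)]; linarith
                  · have : s + 1 < r := this h
                    rw [abs_of_nonpos (by linarith)]; linarith
                have h2 : |s - r| ^ γ ≤ 1 :=
                  Real.rpow_le_one_of_one_le_of_nonpos habs hγ0
                nlinarith [Real.exp_pos (-ϱ * r)]
            _ ≤ ∫⁻ r in Set.Ioi (0:ℝ), ENNReal.ofReal (Real.exp (-ϱ * r)) :=
                lintegral_mono_set Set.diff_subset
  calc ∫⁻ r in Set.Ioi (0:ℝ), ENNReal.ofReal (Real.exp (-ϱ * r) * |s - r| ^ γ)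
      ≤ ∫⁻ r in (Set.Ioi 0 ∩ A) ∪ (Set.Ioi 0 \ A),
          ENNReal.ofReal (Real.exp (-ϱ * r) * |s - r| ^ γ) := lintegral_mono_set hsub
    _ ≤ (∫⁻ r in Set.Ioi 0 ∩ A, ENNReal.ofReal (Real.exp (-ϱ * r) * |s - r| ^ γ))
          + ∫⁻ r in Set.Ioi 0 \ A, ENNReal.ofReal (Real.exp (-ϱ * r) * |s - r| ^ γ) :=
        lintegral_union_le _ _ _
    _ ≤ (∫⁻ u in Set.Icc (-1 : ℝ) 1, ENNReal.ofReal (|u| ^ γ))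
          + ∫⁻ r in Set.Ioi (0 : ℝ), ENNReal.ofReal (Real.exp (-ϱ * r)) :=
        add_le_add hnear hfar

/-- Finiteness of
`M_{ϱ,α,H} = ∫₀^∞∫₀^∞ e^{-ϱs} e^{-ϱr} s^{α-1} r^{α-1} |s-r|^{2H-2} ds dr`. -/
theorem M_integral_finite (α H ϱ : ℝ)
    (hα : α ∈ Set.Ioo (1 / 2 : ℝ) 1) (hH : H ∈ Set.Ioo (1 / 2 : ℝ) 1) (hϱ : 0 < ϱ) :
    (∫⁻ s in Set.Ioi (0 : ℝ), ∫⁻ r in Set.Ioi (0 : ℝ),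
        ENNReal.ofReal
          (Real.exp (-ϱ * s) * Real.exp (-ϱ * r) * s ^ (α - 1) * r ^ (α - 1) *
            |s - r| ^ (2 * H - 2))) < ⊤ := by
  obtain ⟨hα1, hα2⟩ := hα
  obtain ⟨hH1, hH2⟩ := hH
  set γ : ℝ := 2 * H - 2 with hγdef
  set β : ℝ := 2 * α - 2 with hβdef
  have hγ1 : (-1:ℝ) < γ := by rw [hγdef]; linarith
  have hγ0 : γ ≤ 0 := by rw [hγdef]; linarith
  have hβ1 : (-1:ℝ) < β := by rw [hβdef]; linarith
  set C : ℝ≥0∞ := (∫⁻ u in Set.Icc (-1 : ℝ) 1, ENNReal.ofReal (|u| ^ γ)) +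
    ∫⁻ r in Set.Ioi (0 : ℝ), ENNReal.ofReal (Real.exp (-ϱ * r)) with hCdef
  have hC : C < ⊤ := by
    rw [hCdef]
    refine ENNReal.add_lt_top.mpr ⟨Maux_absrpow_lt_top hγ1, ?_⟩
    exact (exp_neg_integrableOn_Ioi 0 hϱ).setLIntegral_lt_top
  set J : ℝ≥0∞ := ∫⁻ s in Set.Ioi (0 : ℝ),
      ENNReal.ofReal (Real.exp (-ϱ * s) * s ^ β) with hJdef
  have hJ : J < ⊤ := Maux_exp_rpow_lt_top hϱ hβ1
  set g : ℝ → ℝ → ℝ≥0∞ := fun s r =>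
    ENNReal.ofReal (Real.exp (-ϱ * s) * s ^ β) *
      ENNReal.ofReal (Real.exp (-ϱ * r) * |s - r| ^ γ) with hgdef
  -- pointwise bound
  have key : ∀ s ∈ Set.Ioi (0:ℝ), ∀ r ∈ Set.Ioi (0:ℝ),
      ENNReal.ofReal (Real.exp (-ϱ * s) * Real.exp (-ϱ * r) * s ^ (α - 1) * r ^ (α - 1) *
        |s - r| ^ γ) ≤ g s r + g r s := by
    intro s hs r hr
    have hs0 : (0:ℝ) < s := hs
    have hr0 : (0:ℝ) < r := hr
    have h1 : s ^ (α - 1) * r ^ (α - 1) ≤ s ^ β + r ^ β := by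
      have hss : s ^ (α - 1) * s ^ (α - 1) = s ^ β := by
        rw [← Real.rpow_add hs0, hβdef]; ring_nf
      have hrr : r ^ (α - 1) * r ^ (α - 1) = r ^ β := by
        rw [← Real.rpow_add hr0, hβdef]; ring_nf
      nlinarith [sq_nonneg (s ^ (α - 1) - r ^ (α - 1))]
    have habs : (0:ℝ) ≤ |s - r| ^ γ := Real.rpow_nonneg (abs_nonneg _) _
    have h2 : Real.exp (-ϱ * s) * Real.exp (-ϱ * r) * s ^ (α - 1) * r ^ (α - 1) *
          |s - r| ^ γ ≤
        (Real.exp (-ϱ * s) * s ^ β) * (Real.exp (-ϱ * r) * |s - r| ^ γ) +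
          (Real.exp (-ϱ * r) * r ^ β) * (Real.exp (-ϱ * s) * |s - r| ^ γ) := by
      have hfac : (0:ℝ) ≤ Real.exp (-ϱ * s) * Real.exp (-ϱ * r) * |s - r| ^ γ := by
        positivity
      calc Real.exp (-ϱ * s) * Real.exp (-ϱ * r) * s ^ (α - 1) * r ^ (α - 1) * |s - r| ^ γ
          = (Real.exp (-ϱ * s) * Real.exp (-ϱ * r) * |s - r| ^ γ) *
              (s ^ (α - 1) * r ^ (α - 1)) := by ring
        _ ≤ (Real.exp (-ϱ * s) * Real.exp (-ϱ * r) * |s - r| ^ γ) * (s ^ β + r ^ β) :=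
            mul_le_mul_of_nonneg_left h1 hfac
        _ = (Real.exp (-ϱ * s) * s ^ β) * (Real.exp (-ϱ * r) * |s - r| ^ γ) +
              (Real.exp (-ϱ * r) * r ^ β) * (Real.exp (-ϱ * s) * |s - r| ^ γ) := by ring
    calc ENNReal.ofReal (Real.exp (-ϱ * s) * Real.exp (-ϱ * r) * s ^ (α - 1) *
          r ^ (α - 1) * |s - r| ^ γ)
        ≤ ENNReal.ofReal ((Real.exp (-ϱ * s) * s ^ β) * (Real.exp (-ϱ * r) * |s - r| ^ γ) +
            (Real.exp (-ϱ * r) * r ^ β) * (Real.exp (-ϱ * s) * |s - r| ^ γ)) :=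
          ENNReal.ofReal_le_ofReal h2
      _ ≤ ENNReal.ofReal ((Real.exp (-ϱ * s) * s ^ β) * (Real.exp (-ϱ * r) * |s - r| ^ γ)) +
            ENNReal.ofReal ((Real.exp (-ϱ * r) * r ^ β) * (Real.exp (-ϱ * s) * |s - r| ^ γ)) :=
          ENNReal.ofReal_add_le
      _ = g s r + g r s := by
          rw [hgdef]
          dsimp only
          rw [ENNReal.ofReal_mul (p := Real.exp (-ϱ * s) * s ^ β) (by positivity),
            ENNReal.ofReal_mul (p := Real.exp (-ϱ * r) * r ^ β) (by positivity),
            abs_sub_comm r s]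
  -- measurability facts
  have hmeas_unc : Measurable (Function.uncurry g) := by
    rw [hgdef]
    fun_prop
  have hmeas_unc' : Measurable (Function.uncurry fun s r => g r s) := by
    have : (Function.uncurry fun s r => g r s) =
        (Function.uncurry g) ∘ Prod.swap := rfl
    rw [this]
    exact hmeas_unc.comp measurable_swap
  have hmeas_g1 : ∀ s : ℝ, Measurable (g s) := by
    intro s
    rw [hgdef]
    fun_prop
  -- bound for the double integral of g
  have hdouble : ∫⁻ s in Set.Ioi (0:ℝ), ∫⁻ r in Set.Ioi (0:ℝ), g s r ≤ J * C := by
    calc ∫⁻ s in Set.Ioi (0:ℝ), ∫⁻ r in Set.Ioi (0:ℝ), g s r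
        ≤ ∫⁻ s in Set.Ioi (0:ℝ), ENNReal.ofReal (Real.exp (-ϱ * s) * s ^ β) * C := by
          refine setLIntegral_mono' measurableSet_Ioi fun s _ => ?_
          rw [hgdef]
          dsimp only
          rw [lintegral_const_mul' _ _ ENNReal.ofReal_ne_top]
          exact mul_le_mul_right (Maux_inner_bound hϱ hγ1 hγ0 s) _
      _ = J * C := lintegral_mul_const' C _ hC.ne
  have hswap : ∫⁻ s in Set.Ioi (0:ℝ), ∫⁻ r in Set.Ioi (0:ℝ), g r s =
      ∫⁻ r in Set.Ioi (0:ℝ), ∫⁻ s in Set.Ioi (0:ℝ), g r s :=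
    lintegral_lintegral_swap hmeas_unc'.aemeasurable
  -- main estimate
  calc (∫⁻ s in Set.Ioi (0 : ℝ), ∫⁻ r in Set.Ioi (0 : ℝ),
        ENNReal.ofReal (Real.exp (-ϱ * s) * Real.exp (-ϱ * r) * s ^ (α - 1) * r ^ (α - 1) *
          |s - r| ^ (2 * H - 2)))
      ≤ ∫⁻ s in Set.Ioi (0:ℝ), ∫⁻ r in Set.Ioi (0:ℝ), (g s r + g r s) := by
        refine setLIntegral_mono' measurableSet_Ioi fun s hs => ?_
        refine setLIntegral_mono' measurableSet_Ioi fun r hr => ?_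
        exact key s hs r hr
    _ = (∫⁻ s in Set.Ioi (0:ℝ), ∫⁻ r in Set.Ioi (0:ℝ), g s r) +
          ∫⁻ s in Set.Ioi (0:ℝ), ∫⁻ r in Set.Ioi (0:ℝ), g r s := by
        have hmeas_outer : Measurable fun s => ∫⁻ r in Set.Ioi (0:ℝ), g s r :=
          Measurable.lintegral_prod_right' (f := Function.uncurry g) hmeas_unc
        have e1 : ∀ s, (∫⁻ r in Set.Ioi (0:ℝ), (g s r + g r s)) =
            (∫⁻ r in Set.Ioi (0:ℝ), g s r) + ∫⁻ r in Set.Ioi (0:ℝ), g r s := fun s =>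
          lintegral_add_left (hmeas_g1 s) _
        rw [lintegral_congr e1, lintegral_add_left hmeas_outer]
    _ ≤ J * C + J * C := by
        refine add_le_add hdouble ?_
        rw [hswap]
        exact hdouble
    _ < ⊤ := by
        have : J * C < ⊤ := ENNReal.mul_lt_top hJ hC
        exact ENNReal.add_lt_top.mpr ⟨this, this⟩
end

section
/- Let α ∈ (0,1), ϱ > 0, t ≥ 0 and θ ≥ 0. Then 0 ≤ ∫₀^t [a(t,s) − a(t+θ,s)] ds ≤ 2θ^α/Γ(α) + 2θ^α/Γ(α+1), where for each s ∈ (0,t) one has a(t,s) ≥ a(t+θ,s). -/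
open MeasureTheory Filter Topology

/-- The Caputo memory kernel `a(t,s) = (1/Γ(α)) (t-s)^(α-1) e^(-ϱ(t-s))`. -/
noncomputable def caputoKernel (α ϱ t s : ℝ) : ℝ :=
  (1 / Real.Gamma α) * (t - s) ^ (α - 1) * Real.exp (-ϱ * (t - s))

/-- For `α ∈ (0,1)`, `ϱ > 0`, `t ≥ 0`, `θ ≥ 0`: the kernel is pointwise
monotone, `a(t+θ,s) ≤ a(t,s)` on `(0,t)`, and
`0 ≤ ∫₀^t [a(t,s) - a(t+θ,s)] ds ≤ 2θ^α/Γ(α) + 2θ^α/Γ(α+1)`. -/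
theorem caputo_kernel_difference_integral_bound (α ϱ t θ : ℝ)
    (hα : α ∈ Set.Ioo (0 : ℝ) 1) (hϱ : 0 < ϱ) (ht : 0 ≤ t) (hθ : 0 ≤ θ) :
    (∀ s ∈ Set.Ioo (0 : ℝ) t, caputoKernel α ϱ (t + θ) s ≤ caputoKernel α ϱ t s) ∧
    0 ≤ ∫ s in Set.Ioo (0 : ℝ) t, (caputoKernel α ϱ t s - caputoKernel α ϱ (t + θ) s) ∧
    (∫ s in Set.Ioo (0 : ℝ) t, (caputoKernel α ϱ t s - caputoKernel α ϱ (t + θ) s))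
      ≤ 2 * θ ^ α / Real.Gamma α + 2 * θ ^ α / Real.Gamma (α + 1) := by
  obtain ⟨hα0, hα1⟩ := hα
  have hΓ : 0 < Real.Gamma α := Real.Gamma_pos_of_pos hα0
  have hΓ1 : 0 < Real.Gamma (α + 1) := Real.Gamma_pos_of_pos (by linarith)
  set F : ℝ → ℝ := fun u => (1 / Real.Gamma α) * u ^ (α - 1) * Real.exp (-ϱ * u) with hF
  have hker : ∀ T s : ℝ, caputoKernel α ϱ T s = F (T - s) := fun T s => rfl
  have hFnn : ∀ u : ℝ, 0 ≤ u → 0 ≤ F u := by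
    intro u hu
    have : (0:ℝ) ≤ u ^ (α - 1) := Real.rpow_nonneg hu _
    positivity
  -- pointwise monotonicity
  have hmono : ∀ s ∈ Set.Ioo (0 : ℝ) t, caputoKernel α ϱ (t + θ) s ≤ caputoKernel α ϱ t s := by
    intro s hs
    rw [hker, hker]
    have h1 : (0:ℝ) < t - s := by linarith [hs.2]
    have h2 : t - s ≤ t + θ - s := by linarith
    have hr : (t + θ - s) ^ (α - 1) ≤ (t - s) ^ (α - 1) :=
      Real.rpow_le_rpow_of_nonpos h1 h2 (by linarith)
    have he : Real.exp (-ϱ * (t + θ - s)) ≤ Real.exp (-ϱ * (t - s)) := by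
      apply Real.exp_le_exp.2; nlinarith
    have hrn : (0:ℝ) ≤ (t + θ - s) ^ (α - 1) := Real.rpow_nonneg (by linarith) _
    have h1Γ : (0:ℝ) ≤ 1 / Real.Gamma α := by positivity
    exact mul_le_mul (mul_le_mul_of_nonneg_left hr h1Γ) he (Real.exp_nonneg _)
      (mul_nonneg h1Γ (Real.rpow_nonneg h1.le _))
  refine ⟨hmono, ?_, ?_⟩
  · exact setIntegral_nonneg measurableSet_Ioo fun s hs => sub_nonneg.2 (hmono s hs)
  -- integrability of F on any interval
  have hFint : ∀ a b : ℝ, IntervalIntegrable F volume a b := by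
    intro a b
    have h1 : IntervalIntegrable (fun u : ℝ => (1 / Real.Gamma α) * u ^ (α - 1)) volume a b :=
      (intervalIntegral.intervalIntegrable_rpow' (by linarith)).const_mul _
    exact h1.mul_continuousOn
      ((Real.continuous_exp.comp (continuous_const.mul continuous_id)).continuousOn)
  have hG1 : IntervalIntegrable (fun s => F (t - s)) volume 0 t := by
    simpa using (hFint t 0).comp_sub_left t
  have hG2 : IntervalIntegrable (fun s => F (t + θ - s)) volume 0 t := by
    simpa using (hFint (t + θ) θ).comp_sub_left (t + θ)
  -- rewrite the set integral as interval integral and change variables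
  have hset : (∫ s in Set.Ioo (0 : ℝ) t, (caputoKernel α ϱ t s - caputoKernel α ϱ (t + θ) s))
      = (∫ u in (0:ℝ)..θ, F u) - ∫ u in t..(t + θ), F u := by
    have e0 : (∫ s in Set.Ioo (0 : ℝ) t, (caputoKernel α ϱ t s - caputoKernel α ϱ (t + θ) s))
        = ∫ s in (0:ℝ)..t, (F (t - s) - F (t + θ - s)) := by
      rw [intervalIntegral.integral_of_le ht, integral_Ioc_eq_integral_Ioo]
      rfl
    rw [e0, intervalIntegral.integral_sub hG1 hG2]
    have e1 : (∫ s in (0:ℝ)..t, F (t - s)) = ∫ u in (0:ℝ)..t, F u := by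
      rw [intervalIntegral.integral_comp_sub_left F t]; norm_num
    have e2 : (∫ s in (0:ℝ)..t, F (t + θ - s)) = ∫ u in θ..(t + θ), F u := by
      rw [intervalIntegral.integral_comp_sub_left F (t + θ)]; norm_num
    rw [e1, e2]
    have c1 : (∫ u in (0:ℝ)..θ, F u) + (∫ u in θ..t, F u) = ∫ u in (0:ℝ)..t, F u :=
      intervalIntegral.integral_add_adjacent_intervals (hFint 0 θ) (hFint θ t)
    have c2 : (∫ u in θ..t, F u) + (∫ u in t..(t + θ), F u) = ∫ u in θ..(t + θ), F u :=
      intervalIntegral.integral_add_adjacent_intervals (hFint θ t) (hFint t (t + θ))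
    linarith
  rw [hset]
  have htail : (0:ℝ) ≤ ∫ u in t..(t + θ), F u :=
    intervalIntegral.integral_nonneg (by linarith) fun u hu => hFnn u (le_trans ht hu.1)
  have hhead : (∫ u in (0:ℝ)..θ, F u) ≤ θ ^ α / Real.Gamma (α + 1) := by
    have hb : (∫ u in (0:ℝ)..θ, (1 / Real.Gamma α) * u ^ (α - 1))
        = θ ^ α / Real.Gamma (α + 1) := by
      rw [intervalIntegral.integral_const_mul, integral_rpow (Or.inl (by linarith))]
      rw [Real.Gamma_add_one hα0.ne']
      have : α - 1 + 1 = α := by ring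
      rw [this, Real.zero_rpow hα0.ne']
      field_simp
      ring
    rw [← hb]
    apply intervalIntegral.integral_mono_on hθ (hFint 0 θ)
      ((intervalIntegral.intervalIntegrable_rpow' (by linarith)).const_mul _)
    intro u hu
    have hun : (0:ℝ) ≤ u := hu.1
    have h1 : Real.exp (-ϱ * u) ≤ 1 := Real.exp_le_one_iff.2 (by nlinarith)
    have h2 : (0:ℝ) ≤ (1 / Real.Gamma α) * u ^ (α - 1) := by
      have := Real.rpow_nonneg hun (α - 1); positivity
    calc (1 / Real.Gamma α) * u ^ (α - 1) * Real.exp (-ϱ * u)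
        ≤ (1 / Real.Gamma α) * u ^ (α - 1) * 1 := by
          exact mul_le_mul_of_nonneg_left h1 h2
      _ = (1 / Real.Gamma α) * u ^ (α - 1) := by ring
  have hθα : (0:ℝ) ≤ θ ^ α := Real.rpow_nonneg hθ _
  have : θ ^ α / Real.Gamma (α + 1) ≤ 2 * θ ^ α / Real.Gamma α + 2 * θ ^ α / Real.Gamma (α + 1) := by
    have h1 : (0:ℝ) ≤ 2 * θ ^ α / Real.Gamma α := by positivity
    have h2 : θ ^ α / Real.Gamma (α + 1) ≤ 2 * θ ^ α / Real.Gamma (α + 1) := by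
      gcongr
      linarith
    linarith
  linarith
end

section
/- Let α ∈ (0,1), ϱ > 0 and θ > 0. Then (1 − e^(−ϱθ)) · ∫₀^∞ (r+θ)^(α−1)·e^(−ϱr) dr ≤ 2θ^α. -/
open MeasureTheory Filter Topology

lemma exp_integral_Ioi' (ϱ : ℝ) (hϱ : 0 < ϱ) :
    (∫ r in Set.Ioi (0 : ℝ), Real.exp (-ϱ * r)) = ϱ⁻¹ := by
  have h := integral_comp_mul_left_Ioi (fun x => Real.exp (-x)) 0 hϱ
  simp only [mul_zero, integral_exp_neg_Ioi, neg_zero, Real.exp_zero, smul_eq_mul,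
    mul_one] at h
  simpa [neg_mul] using h

/-- For `α ∈ (0,1)`, `ϱ > 0` and `θ > 0`,
`(1 - e^{-ϱθ}) ∫₀^∞ (r+θ)^{α-1} e^{-ϱr} dr ≤ 2θ^α`. -/
theorem shifted_kernel_laplace_bound (α ϱ θ : ℝ)
    (hα : α ∈ Set.Ioo (0 : ℝ) 1) (hϱ : 0 < ϱ) (hθ : 0 < θ) :
    (1 - Real.exp (-ϱ * θ)) *
        ∫ r in Set.Ioi (0 : ℝ), (r + θ) ^ (α - 1) * Real.exp (-ϱ * r)
      ≤ 2 * θ ^ α := by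
  obtain ⟨hα0, hα1⟩ := hα
  have hg : IntegrableOn (fun r => θ ^ (α - 1) * Real.exp (-ϱ * r)) (Set.Ioi (0:ℝ)) :=
    (exp_neg_integrableOn_Ioi 0 hϱ).const_mul _
  have hbd : ∀ r ∈ Set.Ioi (0:ℝ),
      (r + θ) ^ (α - 1) * Real.exp (-ϱ * r) ≤ θ ^ (α - 1) * Real.exp (-ϱ * r) := by
    intro r hr
    have hr0 : (0:ℝ) < r := hr
    have h1 : (r + θ) ^ (α - 1) ≤ θ ^ (α - 1) :=
      Real.rpow_le_rpow_of_nonpos hθ (by linarith) (by linarith)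
    exact mul_le_mul_of_nonneg_right h1 (Real.exp_pos _).le
  -- integrability of the main function
  have hf : IntegrableOn (fun r => (r + θ) ^ (α - 1) * Real.exp (-ϱ * r)) (Set.Ioi (0:ℝ)) := by
    refine hg.mono' ?_ ?_
    · apply ContinuousOn.aestronglyMeasurable ?_ measurableSet_Ioi
      refine ContinuousOn.mul ?_ (Continuous.continuousOn (by continuity))
      intro r hr
      have hrθ : (0:ℝ) < r + θ := by simp at hr; positivity
      exact (((continuous_add_right θ).continuousAt).rpow_const (Or.inl hrθ.ne')).continuousWithinAt
    · filter_upwards [ae_restrict_mem measurableSet_Ioi] with r hr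
      have hr0 : (0:ℝ) < r := hr
      rw [Real.norm_eq_abs, abs_of_nonneg (by positivity)]
      exact hbd r hr
  have hIle : (∫ r in Set.Ioi (0:ℝ), (r + θ) ^ (α - 1) * Real.exp (-ϱ * r))
      ≤ θ ^ (α - 1) * ϱ⁻¹ := by
    calc (∫ r in Set.Ioi (0:ℝ), (r + θ) ^ (α - 1) * Real.exp (-ϱ * r))
        ≤ ∫ r in Set.Ioi (0:ℝ), θ ^ (α - 1) * Real.exp (-ϱ * r) :=
          setIntegral_mono_on hf hg measurableSet_Ioi hbd
      _ = θ ^ (α - 1) * ϱ⁻¹ := by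
          rw [integral_const_mul, exp_integral_Ioi' ϱ hϱ]
  have hIpos : (0:ℝ) ≤ ∫ r in Set.Ioi (0:ℝ), (r + θ) ^ (α - 1) * Real.exp (-ϱ * r) := by
    apply setIntegral_nonneg measurableSet_Ioi
    intro r hr
    have : (0:ℝ) < r := hr
    positivity
  have hexp : 1 - Real.exp (-ϱ * θ) ≤ ϱ * θ := by
    have := Real.add_one_le_exp (-ϱ * θ)
    nlinarith [Real.exp_pos (-ϱ * θ)]
  have hexp0 : 0 ≤ 1 - Real.exp (-ϱ * θ) := by
    have : Real.exp (-ϱ * θ) ≤ 1 := Real.exp_le_one_iff.mpr (by nlinarith)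
    linarith
  calc (1 - Real.exp (-ϱ * θ)) * ∫ r in Set.Ioi (0:ℝ), (r + θ) ^ (α - 1) * Real.exp (-ϱ * r)
      ≤ (ϱ * θ) * (θ ^ (α - 1) * ϱ⁻¹) := mul_le_mul hexp hIle hIpos (by positivity)
    _ = θ ^ α := by
        rw [Real.rpow_sub hθ, Real.rpow_one]
        field_simp
    _ ≤ 2 * θ ^ α := by nlinarith [Real.rpow_pos_of_pos hθ α]
end

section
/- Let α ∈ (1/2,1) and H ∈ (1/2,1). Then ∫₀^∞ ∫₀^∞ [u^(α−1) − (u+1)^(α−1)]·[v^(α−1) − (v+1)^(α−1)]·|u−v|^(2H−2) du dv < ∞. -/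
open MeasureTheory Filter Topology

open Set


lemma lint_left {γ : ℝ} (hγl : -1 < γ) {m : ℝ} (hm : 0 ≤ m) (c : ℝ) :
    ∫⁻ v in Set.Ioo (c - m) c, ENNReal.ofReal ((c - v) ^ γ) ≤
      ENNReal.ofReal (m ^ (γ + 1) / (γ + 1)) := by
  have h0 : IntervalIntegrable (fun x : ℝ => x ^ γ) volume 0 m :=
    intervalIntegral.intervalIntegrable_rpow' hγl
  have h1 := (h0.comp_sub_left c).symm
  rw [sub_zero] at h1
  have h2 : IntegrableOn (fun x : ℝ => (c - x) ^ γ) (Set.Ioo (c - m) c) :=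
    (intervalIntegrable_iff_integrableOn_Ioo_of_le (by linarith)).1 h1
  have hnn : 0 ≤ᵐ[volume.restrict (Set.Ioo (c - m) c)] fun x : ℝ => (c - x) ^ γ :=
    ae_restrict_of_forall_mem measurableSet_Ioo fun x hx =>
      Real.rpow_nonneg (by linarith [hx.2]) γ
  rw [← ofReal_integral_eq_lintegral_ofReal h2 hnn]
  apply ENNReal.ofReal_le_ofReal
  rw [← integral_Ioc_eq_integral_Ioo,
    ← intervalIntegral.integral_of_le (by linarith : c - m ≤ c),
    intervalIntegral.integral_comp_sub_left (fun x : ℝ => x ^ γ) c,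
    sub_self, sub_sub_cancel, integral_rpow (Or.inl hγl),
    Real.zero_rpow (ne_of_gt (by linarith : (0:ℝ) < γ + 1)), sub_zero]

lemma lint_right {γ : ℝ} (hγl : -1 < γ) {m : ℝ} (hm : 0 ≤ m) (c : ℝ) :
    ∫⁻ v in Set.Ioo c (c + m), ENNReal.ofReal ((v - c) ^ γ) ≤
      ENNReal.ofReal (m ^ (γ + 1) / (γ + 1)) := by
  have h0 : IntervalIntegrable (fun x : ℝ => x ^ γ) volume 0 m :=
    intervalIntegral.intervalIntegrable_rpow' hγl
  have h1 := h0.comp_sub_right c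
  rw [zero_add, add_comm m c] at h1
  have h2 : IntegrableOn (fun x : ℝ => (x - c) ^ γ) (Set.Ioo c (c + m)) :=
    (intervalIntegrable_iff_integrableOn_Ioo_of_le (by linarith)).1 h1
  have hnn : 0 ≤ᵐ[volume.restrict (Set.Ioo c (c + m))] fun x : ℝ => (x - c) ^ γ :=
    ae_restrict_of_forall_mem measurableSet_Ioo fun x hx =>
      Real.rpow_nonneg (by linarith [hx.1]) γ
  rw [← ofReal_integral_eq_lintegral_ofReal h2 hnn]
  apply ENNReal.ofReal_le_ofReal
  rw [← integral_Ioc_eq_integral_Ioo,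
    ← intervalIntegral.integral_of_le (by linarith : c ≤ c + m),
    intervalIntegral.integral_comp_sub_right (fun x : ℝ => x ^ γ) c,
    sub_self, add_sub_cancel_left, integral_rpow (Or.inl hγl),
    Real.zero_rpow (ne_of_gt (by linarith : (0:ℝ) < γ + 1)), sub_zero]

lemma lint_one_add {s : ℝ} (hs : 1 < s) :
    ∫⁻ v in Set.Ioi (0 : ℝ), ENNReal.ofReal ((1 + v) ^ (-s)) ≤
      ENNReal.ofReal (1 / (s - 1)) := by
  have hmp : MeasurePreserving (fun v : ℝ => 1 + v) volume volume :=
    measurePreserving_add_left volume 1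
  have hemb : MeasurableEmbedding (fun v : ℝ => 1 + v) :=
    (Homeomorph.addLeft (1:ℝ)).isClosedEmbedding.measurableEmbedding
  have himg : (fun v : ℝ => 1 + v) '' Set.Ioi 0 = Set.Ioi 1 := by
    ext x
    simp only [Set.mem_image, Set.mem_Ioi]
    constructor
    · rintro ⟨v, hv, rfl⟩; linarith
    · intro hx; exact ⟨x - 1, by linarith, by ring⟩
  have hswap := hmp.setLIntegral_comp_emb hemb
    (fun w => ENNReal.ofReal (w ^ (-s))) (Set.Ioi 0)
  rw [himg] at hswap
  rw [hswap]
  have hint : IntegrableOn (fun t : ℝ => t ^ (-s)) (Set.Ioi 1) :=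
    integrableOn_Ioi_rpow_of_lt (by linarith) one_pos
  have hnn : 0 ≤ᵐ[volume.restrict (Set.Ioi (1:ℝ))] fun t : ℝ => t ^ (-s) :=
    ae_restrict_of_forall_mem measurableSet_Ioi fun x hx =>
      Real.rpow_nonneg (by linarith [Set.mem_Ioi.1 hx]) _
  rw [← ofReal_integral_eq_lintegral_ofReal hint hnn]
  apply ENNReal.ofReal_le_ofReal
  rw [integral_Ioi_rpow_of_lt (by linarith) one_pos, Real.one_rpow,
    show (-s + 1 : ℝ) = -(s - 1) from by ring, div_neg, neg_div, neg_neg]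

lemma diff_le_rpow_sub_two {α : ℝ} (hα0 : 0 < α) (hα1 : α < 1) {u : ℝ} (hu : 0 < u) :
    u ^ (α - 1) - (u + 1) ^ (α - 1) ≤ u ^ (α - 2) := by
  obtain ⟨c, hc, hc'⟩ := exists_hasDerivAt_eq_slope (fun x : ℝ => x ^ (α - 1))
      (fun x : ℝ => (α - 1) * x ^ (α - 1 - 1)) (by linarith : u < u + 1)
      (fun x hx => (Real.continuousAt_rpow_const x (α - 1)
        (Or.inl (by rcases hx with ⟨h1, _⟩; linarith : x ≠ 0))).continuousWithinAt)
      (fun x hx => Real.hasDerivAt_rpow_const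
        (Or.inl (by rcases hx with ⟨h1, _⟩; linarith : x ≠ 0)))
  have hsl : (u + 1 : ℝ) - u = 1 := by ring
  rw [hsl, div_one] at hc'
  have hre : u ^ (α - 1) - (u + 1) ^ (α - 1) = (1 - α) * c ^ (α - 1 - 1) := by
    have := hc'
    nlinarith [hc']
  have h1 : c ^ (α - 1 - 1) ≤ u ^ (α - 1 - 1) :=
    Real.rpow_le_rpow_of_nonpos hu hc.1.le (by linarith)
  have h2 : (0:ℝ) ≤ c ^ (α - 1 - 1) := Real.rpow_nonneg (by linarith [hc.1] : (0:ℝ) ≤ c) _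
  have h3 : α - 1 - 1 = α - 2 := by ring
  rw [h3] at h1 h2
  rw [hre, h3]
  calc (1 - α) * c ^ (α - 2) ≤ 1 * c ^ (α - 2) :=
        mul_le_mul_of_nonneg_right (by linarith) h2
    _ = c ^ (α - 2) := one_mul _
    _ ≤ u ^ (α - 2) := h1

lemma inner_bound {s γ : ℝ} (hs1 : 1 < s) (hγ1 : -1 < γ) (hγ0 : γ < 0)
    {u : ℝ} (hu : 0 < u) :
    ∫⁻ v in Set.Ioi (0:ℝ), ENNReal.ofReal ((1 + v) ^ (-s) * |u - v| ^ γ) ≤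
      ENNReal.ofReal ((2 ^ s / (γ + 1) + 1 / (s - 1)) * ((1 + u) / 2) ^ γ) := by
  set m := (1 + u) / 2 with hm_def
  have hm : 0 < m := by rw [hm_def]; linarith
  have hpt : ∀ v ∈ Set.Ioi (0:ℝ),
      ENNReal.ofReal ((1 + v) ^ (-s) * |u - v| ^ γ) ≤
        (Set.Ioo (u - m) (u + m)).indicator
            (fun v => ENNReal.ofReal (m ^ (-s) * |u - v| ^ γ)) v
          + ENNReal.ofReal (m ^ γ * (1 + v) ^ (-s)) := by
    intro v hv
    have hv0 : 0 < v := Set.mem_Ioi.1 hv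
    by_cases hvm : v ∈ Set.Ioo (u - m) (u + m)
    · rw [Set.indicator_of_mem hvm]
      refine le_trans ?_ le_self_add
      apply ENNReal.ofReal_le_ofReal
      apply mul_le_mul_of_nonneg_right ?_ (Real.rpow_nonneg (abs_nonneg _) γ)
      apply Real.rpow_le_rpow_of_nonpos hm ?_ (by linarith)
      have h1 := hvm.1
      rw [hm_def] at h1 ⊢; linarith
    · rw [Set.indicator_of_notMem hvm, zero_add]
      apply ENNReal.ofReal_le_ofReal
      rw [mul_comm]
      apply mul_le_mul_of_nonneg_right ?_
        (Real.rpow_nonneg (by linarith : (0:ℝ) ≤ 1 + v) (-s))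
      apply Real.rpow_le_rpow_of_nonpos hm ?_ hγ0.le
      simp only [Set.mem_Ioo, not_and_or, not_lt] at hvm
      rcases hvm with h | h
      · exact le_abs.2 (Or.inl (by linarith))
      · exact le_abs.2 (Or.inr (by linarith))
  have hmeas_ind : Measurable ((Set.Ioo (u - m) (u + m)).indicator
      (fun v => ENNReal.ofReal (m ^ (-s) * |u - v| ^ γ))) := by
    apply Measurable.indicator ?_ measurableSet_Ioo
    fun_prop
  calc ∫⁻ v in Set.Ioi (0:ℝ), ENNReal.ofReal ((1 + v) ^ (-s) * |u - v| ^ γ)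
      ≤ ∫⁻ v in Set.Ioi (0:ℝ),
          ((Set.Ioo (u - m) (u + m)).indicator
            (fun v => ENNReal.ofReal (m ^ (-s) * |u - v| ^ γ)) v
          + ENNReal.ofReal (m ^ γ * (1 + v) ^ (-s))) :=
        setLIntegral_mono' measurableSet_Ioi hpt
    _ = (∫⁻ v in Set.Ioi (0:ℝ), (Set.Ioo (u - m) (u + m)).indicator
            (fun v => ENNReal.ofReal (m ^ (-s) * |u - v| ^ γ)) v)
          + ∫⁻ v in Set.Ioi (0:ℝ), ENNReal.ofReal (m ^ γ * (1 + v) ^ (-s)) :=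
        lintegral_add_left hmeas_ind _
    _ ≤ (∫⁻ v in Set.Ioo (u - m) (u + m), ENNReal.ofReal (m ^ (-s) * |u - v| ^ γ))
          + ENNReal.ofReal (m ^ γ) * ENNReal.ofReal (1 / (s - 1)) := by
        apply add_le_add
        · calc ∫⁻ v in Set.Ioi (0:ℝ), (Set.Ioo (u - m) (u + m)).indicator
                (fun v => ENNReal.ofReal (m ^ (-s) * |u - v| ^ γ)) v
              ≤ ∫⁻ v, (Set.Ioo (u - m) (u + m)).indicator
                (fun v => ENNReal.ofReal (m ^ (-s) * |u - v| ^ γ)) v :=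
                setLIntegral_le_lintegral _ _
            _ = _ := lintegral_indicator measurableSet_Ioo _
        · calc ∫⁻ v in Set.Ioi (0:ℝ), ENNReal.ofReal (m ^ γ * (1 + v) ^ (-s))
              = ENNReal.ofReal (m ^ γ) *
                  ∫⁻ v in Set.Ioi (0:ℝ), ENNReal.ofReal ((1 + v) ^ (-s)) := by
                simp_rw [ENNReal.ofReal_mul (Real.rpow_nonneg hm.le γ)]
                rw [lintegral_const_mul' _ _ ENNReal.ofReal_ne_top]
            _ ≤ ENNReal.ofReal (m ^ γ) * ENNReal.ofReal (1 / (s - 1)) := by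
                gcongr
                exact lint_one_add hs1
    _ ≤ ENNReal.ofReal (m ^ (-s)) *
          (ENNReal.ofReal (m ^ (γ + 1) / (γ + 1))
            + (0 + ENNReal.ofReal (m ^ (γ + 1) / (γ + 1))))
          + ENNReal.ofReal (m ^ γ) * ENNReal.ofReal (1 / (s - 1)) := by
        apply add_le_add_left
        calc ∫⁻ v in Set.Ioo (u - m) (u + m), ENNReal.ofReal (m ^ (-s) * |u - v| ^ γ)
            = ENNReal.ofReal (m ^ (-s)) *
                ∫⁻ v in Set.Ioo (u - m) (u + m), ENNReal.ofReal (|u - v| ^ γ) := by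
              simp_rw [ENNReal.ofReal_mul (Real.rpow_nonneg hm.le (-s))]
              rw [lintegral_const_mul' _ _ ENNReal.ofReal_ne_top]
          _ ≤ _ := by
              gcongr
              calc ∫⁻ v in Set.Ioo (u - m) (u + m), ENNReal.ofReal (|u - v| ^ γ)
                  ≤ ∫⁻ v in (Set.Ioo (u - m) u ∪ ({u} ∪ Set.Ioo u (u + m))),
                      ENNReal.ofReal (|u - v| ^ γ) := by
                    apply lintegral_mono_set
                    intro x hx
                    rcases lt_trichotomy x u with h | h | h
                    · exact Or.inl ⟨hx.1, h⟩
                    · exact Or.inr (Or.inl (by simp [h]))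
                    · exact Or.inr (Or.inr ⟨h, hx.2⟩)
                _ ≤ (∫⁻ v in Set.Ioo (u - m) u, ENNReal.ofReal (|u - v| ^ γ))
                      + ((∫⁻ v in ({u} : Set ℝ), ENNReal.ofReal (|u - v| ^ γ))
                        + ∫⁻ v in Set.Ioo u (u + m), ENNReal.ofReal (|u - v| ^ γ)) :=
                    le_trans (lintegral_union_le _ _ _)
                      (by gcongr; exact lintegral_union_le _ _ _)
                _ ≤ ENNReal.ofReal (m ^ (γ + 1) / (γ + 1))
                      + (0 + ENNReal.ofReal (m ^ (γ + 1) / (γ + 1))) := by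
                    gcongr
                    · calc ∫⁻ v in Set.Ioo (u - m) u, ENNReal.ofReal (|u - v| ^ γ)
                          = ∫⁻ v in Set.Ioo (u - m) u, ENNReal.ofReal ((u - v) ^ γ) := by
                            apply setLIntegral_congr_fun measurableSet_Ioo
                            intro x hx
                            dsimp only
                            rw [abs_of_pos (by linarith [hx.2] : (0:ℝ) < u - x)]
                        _ ≤ _ := lint_left hγ1 hm.le u
                    · calc ∫⁻ v in ({u} : Set ℝ), ENNReal.ofReal (|u - v| ^ γ)
                          = 0 := by
                            rw [setLIntegral_measure_zero _ _ Real.volume_singleton]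
                        _ ≤ 0 := le_rfl
                    · calc ∫⁻ v in Set.Ioo u (u + m), ENNReal.ofReal (|u - v| ^ γ)
                          = ∫⁻ v in Set.Ioo u (u + m), ENNReal.ofReal ((v - u) ^ γ) := by
                            apply setLIntegral_congr_fun measurableSet_Ioo
                            intro x hx
                            dsimp only
                            rw [abs_sub_comm, abs_of_pos (by linarith [hx.1] : (0:ℝ) < x - u)]
                        _ ≤ _ := lint_right hγ1 hm.le u
    _ ≤ ENNReal.ofReal ((2 ^ s / (γ + 1) + 1 / (s - 1)) * m ^ γ) := by
        have hX : (0:ℝ) ≤ m ^ (γ + 1) / (γ + 1) :=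
          div_nonneg (Real.rpow_nonneg hm.le _) (by linarith)
        rw [zero_add, ← ENNReal.ofReal_add hX hX,
          ← ENNReal.ofReal_mul (Real.rpow_nonneg hm.le (-s)),
          ← ENNReal.ofReal_mul (Real.rpow_nonneg hm.le γ),
          ← ENNReal.ofReal_add]
        · apply ENNReal.ofReal_le_ofReal
          have hγp : (0:ℝ) < γ + 1 := by linarith
          have e1 : m ^ (-s) * m ^ (γ + 1) = m ^ γ * m ^ (1 - s) := by
            rw [← Real.rpow_add hm, ← Real.rpow_add hm]; ring_nf
          have e2 : m ^ (1 - s) ≤ 2 ^ (s - 1) := by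
            have h12 : m ^ (1 - s) ≤ ((1:ℝ)/2) ^ (1 - s) := by
              apply Real.rpow_le_rpow_of_nonpos (by norm_num)
                (by rw [hm_def]; linarith) (by linarith)
            calc m ^ (1 - s) ≤ ((1:ℝ)/2) ^ (1 - s) := h12
              _ = 2 ^ (s - 1) := by
                rw [show (1:ℝ)/2 = 2⁻¹ by norm_num,
                  Real.inv_rpow (by norm_num : (0:ℝ) ≤ 2),
                  ← Real.rpow_neg (by norm_num : (0:ℝ) ≤ 2),
                  show -(1 - s) = s - 1 by ring]
          have hmγ : (0:ℝ) ≤ m ^ γ := Real.rpow_nonneg hm.le γ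
          have key : m ^ (-s) * m ^ (γ + 1) ≤ 2 ^ (s - 1) * m ^ γ := by
            rw [e1, mul_comm ((2:ℝ) ^ (s-1)) (m ^ γ)]
            exact mul_le_mul_of_nonneg_left e2 hmγ
          have e3 : (2:ℝ) ^ s = 2 * 2 ^ (s - 1) := by
            nth_rewrite 1 [show s = 1 + (s - 1) by ring]
            rw [Real.rpow_add (by norm_num : (0:ℝ) < 2), Real.rpow_one]
          calc m ^ (-s) * (m ^ (γ + 1) / (γ + 1) + m ^ (γ + 1) / (γ + 1))
                + m ^ γ * (1 / (s - 1))
              = (m ^ (-s) * m ^ (γ + 1)) * (2/(γ + 1)) + m ^ γ * (1/(s - 1)) := by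
                field_simp; ring
            _ ≤ (2 ^ (s - 1) * m ^ γ) * (2/(γ + 1)) + m ^ γ * (1/(s - 1)) := by
                apply add_le_add_left
                apply mul_le_mul_of_nonneg_right key
                  (div_nonneg (by norm_num) (by linarith))
            _ = (2 * 2 ^ (s - 1)/(γ + 1) + 1/(s - 1)) * m ^ γ := by ring
            _ = (2 ^ s/(γ + 1) + 1/(s - 1)) * m ^ γ := by rw [e3]
        · exact mul_nonneg (Real.rpow_nonneg hm.le _) (by positivity)
        · exact mul_nonneg (Real.rpow_nonneg hm.le _)
            (div_nonneg (by norm_num) (by linarith))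

/-- For `α ∈ (1/2,1)` and `H ∈ (1/2,1)`,
`∫₀^∞∫₀^∞ [u^{α-1}-(u+1)^{α-1}][v^{α-1}-(v+1)^{α-1}] |u-v|^{2H-2} du dv < ∞`. -/
theorem kernel_difference_double_integral_finite (α H : ℝ)
    (hα : α ∈ Set.Ioo (1 / 2 : ℝ) 1) (hH : H ∈ Set.Ioo (1 / 2 : ℝ) 1) :
    (∫⁻ u in Set.Ioi (0 : ℝ), ∫⁻ v in Set.Ioi (0 : ℝ),
        ENNReal.ofReal
          ((u ^ (α - 1) - (u + 1) ^ (α - 1)) * (v ^ (α - 1) - (v + 1) ^ (α - 1)) *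
            |u - v| ^ (2 * H - 2))) < ⊤ := by
  obtain ⟨hα1, hα2⟩ := hα
  obtain ⟨hH1, hH2⟩ := hH
  set γ : ℝ := 2 * H - 2 with hγ_def
  set sp : ℝ := 3 - α - H with hs_def
  have hγ1 : -1 < γ := by rw [hγ_def]; linarith
  have hγ0 : γ < 0 := by rw [hγ_def]; linarith
  have hs1 : 1 < sp := by rw [hs_def]; linarith
  have hs2 : sp < 2 := by rw [hs_def]; linarith
  have hsγ0 : 0 < sp + γ := by rw [hs_def, hγ_def]; linarith
  set C : ℝ := 2 ^ sp / (γ + 1) + 1 / (sp - 1) with hC_def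
  have hC0 : 0 ≤ C := by
    rw [hC_def]
    exact add_nonneg
      (div_nonneg (Real.rpow_nonneg (by norm_num) sp) (by linarith))
      (div_nonneg zero_le_one (by linarith))
  set f : ℝ → ℝ := fun u => u ^ (α - 1) - (u + 1) ^ (α - 1) with hf_def
  set P : ℝ → ℝ := fun u => f u ^ 2 * (1 + u) ^ sp with hP_def
  set k : ℝ → ℝ → ℝ := fun x y => (1 + y) ^ (-sp) * |x - y| ^ γ with hk_def
  have hf_nonneg : ∀ u : ℝ, 0 < u → 0 ≤ f u := fun u hu =>
    sub_nonneg.2 (Real.rpow_le_rpow_of_nonpos hu (by linarith) (by linarith))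
  have hf_le1 : ∀ u : ℝ, 0 < u → f u ≤ u ^ (α - 1) := fun u hu =>
    sub_le_self _ (Real.rpow_nonneg (by linarith) _)
  have hf_le2 : ∀ u : ℝ, 0 < u → f u ≤ u ^ (α - 2) := fun u hu =>
    diff_le_rpow_sub_two (by linarith) hα2 hu
  have hP_nonneg : ∀ u : ℝ, 0 < u → 0 ≤ P u := fun u hu =>
    mul_nonneg (sq_nonneg _) (Real.rpow_nonneg (by linarith) _)
  -- measurability
  have meas1 : ∀ u : ℝ, Measurable fun v => ENNReal.ofReal (P u * k u v) := by
    intro u; simp only [hP_def, hk_def, hf_def]; fun_prop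
  have measIu : Measurable fun u => ∫⁻ v in Set.Ioi (0:ℝ), ENNReal.ofReal (P u * k u v) := by
    apply Measurable.lintegral_prod_right
    simp only [hP_def, hk_def, hf_def]; fun_prop
  -- Step 1: pointwise AM-GM bound
  have step1 : ∀ u ∈ Set.Ioi (0:ℝ), ∀ v ∈ Set.Ioi (0:ℝ),
      ENNReal.ofReal (f u * f v * |u - v| ^ γ) ≤
        ENNReal.ofReal (P u * k u v) + ENNReal.ofReal (P v * k v u) := by
    intro u hu v hv
    have hu0 : 0 < u := hu
    have hv0 : 0 < v := hv
    have h1u : (0:ℝ) < 1 + u := by linarith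
    have h1v : (0:ℝ) < 1 + v := by linarith
    refine le_trans (ENNReal.ofReal_le_ofReal ?_) ENNReal.ofReal_add_le
    have hr : (0:ℝ) < (1 + u) ^ sp * (1 + v) ^ (-sp) := by
      have := Real.rpow_pos_of_pos h1u sp
      have := Real.rpow_pos_of_pos h1v (-sp)
      positivity
    have hrr : ((1 + u) ^ sp * (1 + v) ^ (-sp)) * ((1 + v) ^ sp * (1 + u) ^ (-sp)) = 1 := by
      rw [Real.rpow_neg h1u.le, Real.rpow_neg h1v.le]
      have h1 := (Real.rpow_pos_of_pos h1u sp).ne'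
      have h2 := (Real.rpow_pos_of_pos h1v sp).ne'
      field_simp
    have key : f u * f v ≤
        f u ^ 2 * ((1 + u) ^ sp * (1 + v) ^ (-sp))
          + f v ^ 2 * ((1 + v) ^ sp * (1 + u) ^ (-sp)) := by
      nlinarith [sq_nonneg (f u * ((1 + u) ^ sp * (1 + v) ^ (-sp)) - f v),
        mul_nonneg (hf_nonneg u hu0) (hf_nonneg v hv0), hr, hrr,
        mul_pos hr hr]
    calc f u * f v * |u - v| ^ γ
        ≤ (f u ^ 2 * ((1 + u) ^ sp * (1 + v) ^ (-sp))
            + f v ^ 2 * ((1 + v) ^ sp * (1 + u) ^ (-sp))) * |u - v| ^ γ :=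
          mul_le_mul_of_nonneg_right key (Real.rpow_nonneg (abs_nonneg _) γ)
      _ = P u * k u v + P v * k v u := by
          simp only [hP_def, hk_def]
          rw [abs_sub_comm v u]
          ring
  -- Step 2: reduce to the single integral I₁
  have step2 : (∫⁻ u in Set.Ioi (0 : ℝ), ∫⁻ v in Set.Ioi (0 : ℝ),
        ENNReal.ofReal (f u * f v * |u - v| ^ γ)) ≤
      2 * ∫⁻ u in Set.Ioi (0:ℝ), ∫⁻ v in Set.Ioi (0:ℝ), ENNReal.ofReal (P u * k u v) := by
    have hswap : (∫⁻ u in Set.Ioi (0:ℝ), ∫⁻ v in Set.Ioi (0:ℝ),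
          ENNReal.ofReal (P v * k v u)) =
        ∫⁻ v in Set.Ioi (0:ℝ), ∫⁻ u in Set.Ioi (0:ℝ), ENNReal.ofReal (P v * k v u) := by
      apply lintegral_lintegral_swap
      apply Measurable.aemeasurable
      simp only [hP_def, hk_def, hf_def]; fun_prop
    calc (∫⁻ u in Set.Ioi (0 : ℝ), ∫⁻ v in Set.Ioi (0 : ℝ),
          ENNReal.ofReal (f u * f v * |u - v| ^ γ))
        ≤ ∫⁻ u in Set.Ioi (0:ℝ), ∫⁻ v in Set.Ioi (0:ℝ),
            (ENNReal.ofReal (P u * k u v) + ENNReal.ofReal (P v * k v u)) :=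
          setLIntegral_mono' measurableSet_Ioi fun u hu =>
            setLIntegral_mono' measurableSet_Ioi fun v hv => step1 u hu v hv
      _ = ∫⁻ u in Set.Ioi (0:ℝ), ((∫⁻ v in Set.Ioi (0:ℝ), ENNReal.ofReal (P u * k u v))
            + ∫⁻ v in Set.Ioi (0:ℝ), ENNReal.ofReal (P v * k v u)) :=
          lintegral_congr fun u => lintegral_add_left (meas1 u) _
      _ = (∫⁻ u in Set.Ioi (0:ℝ), ∫⁻ v in Set.Ioi (0:ℝ), ENNReal.ofReal (P u * k u v))
            + ∫⁻ u in Set.Ioi (0:ℝ), ∫⁻ v in Set.Ioi (0:ℝ), ENNReal.ofReal (P v * k v u) :=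
          lintegral_add_left measIu _
      _ = (∫⁻ u in Set.Ioi (0:ℝ), ∫⁻ v in Set.Ioi (0:ℝ), ENNReal.ofReal (P u * k u v))
            + ∫⁻ v in Set.Ioi (0:ℝ), ∫⁻ u in Set.Ioi (0:ℝ), ENNReal.ofReal (P v * k v u) := by
          rw [hswap]
      _ = 2 * ∫⁻ u in Set.Ioi (0:ℝ), ∫⁻ v in Set.Ioi (0:ℝ), ENNReal.ofReal (P u * k u v) := by
          rw [two_mul]
  -- Step 3: bound I₁ by a single integral
  have step3 : (∫⁻ u in Set.Ioi (0:ℝ), ∫⁻ v in Set.Ioi (0:ℝ), ENNReal.ofReal (P u * k u v)) ≤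
      ∫⁻ u in Set.Ioi (0:ℝ), ENNReal.ofReal (C * (P u * ((1 + u) / 2) ^ γ)) := by
    apply setLIntegral_mono' measurableSet_Ioi
    intro u hu
    have hu0 : 0 < u := hu
    calc ∫⁻ v in Set.Ioi (0:ℝ), ENNReal.ofReal (P u * k u v)
        = ENNReal.ofReal (P u) * ∫⁻ v in Set.Ioi (0:ℝ), ENNReal.ofReal (k u v) := by
          simp_rw [ENNReal.ofReal_mul (hP_nonneg u hu0)]
          rw [lintegral_const_mul' _ _ ENNReal.ofReal_ne_top]
      _ ≤ ENNReal.ofReal (P u) * ENNReal.ofReal (C * ((1 + u) / 2) ^ γ) := by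
          apply mul_le_mul_right
          rw [hC_def]
          simp only [hk_def]
          exact inner_bound hs1 hγ1 hγ0 hu0
      _ = ENNReal.ofReal (C * (P u * ((1 + u) / 2) ^ γ)) := by
          rw [← ENNReal.ofReal_mul (hP_nonneg u hu0)]
          ring_nf
  -- Step 4: finiteness of the remaining integral
  have step4 : (∫⁻ u in Set.Ioi (0:ℝ), ENNReal.ofReal (C * (P u * ((1 + u) / 2) ^ γ))) < ⊤ := by
    have hsplit : (∫⁻ u in Set.Ioi (0:ℝ), ENNReal.ofReal (C * (P u * ((1 + u) / 2) ^ γ))) ≤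
        (∫⁻ u in Set.Ioc (0:ℝ) 1, ENNReal.ofReal (C * (P u * ((1 + u) / 2) ^ γ)))
          + ∫⁻ u in Set.Ioi (1:ℝ), ENNReal.ofReal (C * (P u * ((1 + u) / 2) ^ γ)) := by
      rw [← Set.Ioc_union_Ioi_eq_Ioi (zero_le_one : (0:ℝ) ≤ 1)]
      exact lintegral_union_le _ _ _
    have hpieceA : (∫⁻ u in Set.Ioc (0:ℝ) 1,
        ENNReal.ofReal (C * (P u * ((1 + u) / 2) ^ γ))) < ⊤ := by
      have hb : ∀ u ∈ Set.Ioc (0:ℝ) 1,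
          ENNReal.ofReal (C * (P u * ((1 + u) / 2) ^ γ)) ≤
            ENNReal.ofReal (8 * C * u ^ (2 * α - 2)) := by
        intro u hu
        have hu0 : 0 < u := hu.1
        have hu1 : u ≤ 1 := hu.2
        apply ENNReal.ofReal_le_ofReal
        have hfu2 : f u ^ 2 ≤ u ^ (2 * α - 2) := by
          have h1 : f u ^ 2 ≤ (u ^ (α - 1)) ^ 2 :=
            pow_le_pow_left₀ (hf_nonneg u hu0) (hf_le1 u hu0) 2
          have h2 : (u ^ (α - 1)) ^ 2 = u ^ (2 * α - 2) := by
            rw [pow_two, ← Real.rpow_add hu0]; congr 1; ring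
          linarith
        have h_s : (1 + u) ^ sp ≤ 4 := by
          calc (1 + u) ^ sp ≤ 2 ^ sp :=
                Real.rpow_le_rpow (by linarith) (by linarith) (by linarith)
            _ ≤ 2 ^ (2:ℝ) :=
                Real.rpow_le_rpow_of_exponent_le one_le_two hs2.le
            _ = 4 := by
                rw [show (2:ℝ) = ((2:ℕ):ℝ) by norm_num, Real.rpow_natCast]; norm_num
        have h_m : ((1 + u) / 2) ^ γ ≤ 2 := by
          calc ((1 + u) / 2) ^ γ ≤ ((1:ℝ) / 2) ^ γ :=
                Real.rpow_le_rpow_of_nonpos (by norm_num) (by linarith) hγ0.le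
            _ = 2 ^ (-γ) := by
                rw [show (1:ℝ)/2 = 2⁻¹ by norm_num,
                  Real.inv_rpow (by norm_num : (0:ℝ) ≤ 2),
                  ← Real.rpow_neg (by norm_num : (0:ℝ) ≤ 2)]
            _ ≤ 2 ^ (1:ℝ) :=
                Real.rpow_le_rpow_of_exponent_le one_le_two (by linarith)
            _ = 2 := Real.rpow_one 2
        have b1 : f u ^ 2 * (1 + u) ^ sp ≤ u ^ (2 * α - 2) * 4 :=
          mul_le_mul hfu2 h_s (Real.rpow_nonneg (by linarith) _)
            (Real.rpow_nonneg hu0.le _)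
        have b2 : (f u ^ 2 * (1 + u) ^ sp) * ((1 + u) / 2) ^ γ ≤ (u ^ (2 * α - 2) * 4) * 2 :=
          mul_le_mul b1 h_m (Real.rpow_nonneg (by linarith) _)
            (mul_nonneg (Real.rpow_nonneg hu0.le _) (by norm_num))
        have b3 := mul_le_mul_of_nonneg_left b2 hC0
        calc C * (P u * ((1 + u) / 2) ^ γ)
            = C * ((f u ^ 2 * (1 + u) ^ sp) * ((1 + u) / 2) ^ γ) := by
              simp only [hP_def]
          _ ≤ C * ((u ^ (2 * α - 2) * 4) * 2) := b3
          _ = 8 * C * u ^ (2 * α - 2) := by ring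
      have hint : IntegrableOn (fun u : ℝ => 8 * C * u ^ (2 * α - 2)) (Set.Ioc 0 1) := by
        apply Integrable.const_mul
        exact (intervalIntegrable_iff_integrableOn_Ioc_of_le zero_le_one).1
          (intervalIntegral.intervalIntegrable_rpow' (by linarith))
      calc (∫⁻ u in Set.Ioc (0:ℝ) 1, ENNReal.ofReal (C * (P u * ((1 + u) / 2) ^ γ)))
          ≤ ∫⁻ u in Set.Ioc (0:ℝ) 1, ENNReal.ofReal (8 * C * u ^ (2 * α - 2)) :=
            setLIntegral_mono' measurableSet_Ioc hb
        _ < ⊤ := hint.lintegral_lt_top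
    have hpieceB : (∫⁻ u in Set.Ioi (1:ℝ),
        ENNReal.ofReal (C * (P u * ((1 + u) / 2) ^ γ))) < ⊤ := by
      have hb : ∀ u ∈ Set.Ioi (1:ℝ),
          ENNReal.ofReal (C * (P u * ((1 + u) / 2) ^ γ)) ≤
            ENNReal.ofReal (8 * C * u ^ (α + H - 3)) := by
        intro u hu
        have hu1 : 1 < u := hu
        have hu0 : 0 < u := by linarith
        apply ENNReal.ofReal_le_ofReal
        have hfu2 : f u ^ 2 ≤ u ^ (2 * α - 4) := by
          have h1 : f u ^ 2 ≤ (u ^ (α - 2)) ^ 2 :=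
            pow_le_pow_left₀ (hf_nonneg u hu0) (hf_le2 u hu0) 2
          have h2 : (u ^ (α - 2)) ^ 2 = u ^ (2 * α - 4) := by
            rw [pow_two, ← Real.rpow_add hu0]; congr 1; ring
          linarith
        have h_s : (1 + u) ^ sp ≤ 4 * u ^ sp := by
          calc (1 + u) ^ sp ≤ (2 * u) ^ sp :=
                Real.rpow_le_rpow (by linarith) (by linarith) (by linarith)
            _ = 2 ^ sp * u ^ sp := Real.mul_rpow (by norm_num) hu0.le
            _ ≤ 4 * u ^ sp := by
                apply mul_le_mul_of_nonneg_right _ (Real.rpow_nonneg hu0.le _)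
                calc (2:ℝ) ^ sp ≤ 2 ^ (2:ℝ) :=
                      Real.rpow_le_rpow_of_exponent_le one_le_two hs2.le
                  _ = 4 := by
                      rw [show (2:ℝ) = ((2:ℕ):ℝ) by norm_num, Real.rpow_natCast]; norm_num
        have h_m : ((1 + u) / 2) ^ γ ≤ 2 * u ^ γ := by
          calc ((1 + u) / 2) ^ γ ≤ (u / 2) ^ γ :=
                Real.rpow_le_rpow_of_nonpos (by linarith) (by linarith) hγ0.le
            _ = u ^ γ / 2 ^ γ := Real.div_rpow hu0.le (by norm_num : (0:ℝ) ≤ 2) γ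
            _ = u ^ γ * 2 ^ (-γ) := by
                rw [Real.rpow_neg (by norm_num : (0:ℝ) ≤ 2)]; ring
            _ ≤ u ^ γ * 2 := by
                apply mul_le_mul_of_nonneg_left _ (Real.rpow_nonneg hu0.le _)
                calc (2:ℝ) ^ (-γ) ≤ 2 ^ (1:ℝ) :=
                      Real.rpow_le_rpow_of_exponent_le one_le_two (by linarith)
                  _ = 2 := Real.rpow_one 2
            _ = 2 * u ^ γ := by ring
        have b1 : f u ^ 2 * (1 + u) ^ sp ≤ u ^ (2 * α - 4) * (4 * u ^ sp) :=
          mul_le_mul hfu2 h_s (Real.rpow_nonneg (by linarith) _)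
            (Real.rpow_nonneg hu0.le _)
        have b2 : (f u ^ 2 * (1 + u) ^ sp) * ((1 + u) / 2) ^ γ ≤
            (u ^ (2 * α - 4) * (4 * u ^ sp)) * (2 * u ^ γ) :=
          mul_le_mul b1 h_m (Real.rpow_nonneg (by linarith) _)
            (by positivity)
        have b3 := mul_le_mul_of_nonneg_left b2 hC0
        have hexp : u ^ (2 * α - 4) * u ^ sp * u ^ γ = u ^ (α + H - 3) := by
          rw [← Real.rpow_add hu0, ← Real.rpow_add hu0, hs_def, hγ_def]
          congr 1; ring
        calc C * (P u * ((1 + u) / 2) ^ γ)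
            = C * ((f u ^ 2 * (1 + u) ^ sp) * ((1 + u) / 2) ^ γ) := by
              simp only [hP_def]
          _ ≤ C * ((u ^ (2 * α - 4) * (4 * u ^ sp)) * (2 * u ^ γ)) := b3
          _ = 8 * C * (u ^ (2 * α - 4) * u ^ sp * u ^ γ) := by ring
          _ = 8 * C * u ^ (α + H - 3) := by rw [hexp]
      have hint : IntegrableOn (fun u : ℝ => 8 * C * u ^ (α + H - 3)) (Set.Ioi 1) := by
        apply Integrable.const_mul
        exact integrableOn_Ioi_rpow_of_lt (by linarith) one_pos
      calc (∫⁻ u in Set.Ioi (1:ℝ), ENNReal.ofReal (C * (P u * ((1 + u) / 2) ^ γ)))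
          ≤ ∫⁻ u in Set.Ioi (1:ℝ), ENNReal.ofReal (8 * C * u ^ (α + H - 3)) :=
            setLIntegral_mono' measurableSet_Ioi hb
        _ < ⊤ := hint.lintegral_lt_top
    exact lt_of_le_of_lt hsplit (ENNReal.add_lt_top.2 ⟨hpieceA, hpieceB⟩)
  -- assemble
  calc (∫⁻ u in Set.Ioi (0 : ℝ), ∫⁻ v in Set.Ioi (0 : ℝ),
        ENNReal.ofReal
          ((u ^ (α - 1) - (u + 1) ^ (α - 1)) * (v ^ (α - 1) - (v + 1) ^ (α - 1)) *
            |u - v| ^ γ))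
      = ∫⁻ u in Set.Ioi (0 : ℝ), ∫⁻ v in Set.Ioi (0 : ℝ),
          ENNReal.ofReal (f u * f v * |u - v| ^ γ) := by simp only [hf_def]
    _ ≤ 2 * ∫⁻ u in Set.Ioi (0:ℝ), ∫⁻ v in Set.Ioi (0:ℝ),
          ENNReal.ofReal (P u * k u v) := step2
    _ ≤ 2 * ∫⁻ u in Set.Ioi (0:ℝ), ENNReal.ofReal (C * (P u * ((1 + u) / 2) ^ γ)) := by
        exact mul_le_mul_right step3 2
    _ < ⊤ := by
        rw [ENNReal.mul_lt_top_iff]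
        left
        exact ⟨by norm_num, step4⟩
end

section
/- Let α ∈ (1/2,1), ϱ > 0, H ∈ (1/2,1), λ > 0 and t ≥ 0. Then ∫₀^t ∫₀^t a(t,s)·a(t,r)·φ_{H,λ}(s,r) ds dr ≤ (H−1/2)² · B(H−1/2, 2−2H) · M_{ϱ,α,H} / Γ(α)², where B denotes the Euler Beta function. -/
open MeasureTheory Filter Topology

/-- The covariance density `φ_{H,λ}` of tempered fractional Brownian motion. -/
noncomputable def tfbmPhi (H lam s t : ℝ) : ℝ :=
  (H - 1 / 2) ^ 2 *
      ∫ τ in Set.Ioi (0 : ℝ),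
        τ ^ (H - 3 / 2) * (|t - s| + τ) ^ (H - 3 / 2) *
          Real.exp (-lam * τ - lam * (|t - s| + τ)) -
    lam ^ 2 *
      ∫ τ in Set.Ioi (0 : ℝ),
        τ ^ (H - 1 / 2) * (|t - s| + τ) ^ (H - 1 / 2) *
          Real.exp (-lam * τ - lam * (|t - s| + τ))

/-- The Euler Beta function `B(x,y) = ∫₀¹ u^{x-1} (1-u)^{y-1} du`. -/
noncomputable def betaFn (x y : ℝ) : ℝ :=
  ∫ u in Set.Ioo (0 : ℝ) 1, u ^ (x - 1) * (1 - u) ^ (y - 1)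

/-! ### Auxiliary lemmas -/

lemma aux_calc {H d u : ℝ} (hd : 0 < d) (hu : u ∈ Set.Ioo (0:ℝ) 1) :
    |d/(1-u)^2| * ((d*u/(1-u)) ^ (H-3/2) * (d + d*u/(1-u)) ^ (H-3/2)) =
      d ^ (2*H-2) * (u ^ (H-1/2-1) * (1-u) ^ (2-2*H-1)) := by
  obtain ⟨hu0, hu1⟩ := hu
  have hv : (0:ℝ) < 1 - u := by linarith
  have h1 : d + d*u/(1-u) = d/(1-u) := by field_simp; ring
  rw [h1, abs_of_pos (by positivity)]
  rw [Real.div_rpow (by positivity) hv.le, Real.div_rpow hd.le hv.le,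
    Real.mul_rpow hd.le hu0.le]
  rw [show (H-1/2-1 : ℝ) = H-3/2 by ring]
  rw [show (2*H-2 : ℝ) = 1 + (H-3/2) + (H-3/2) by ring,
    Real.rpow_add hd, Real.rpow_add hd, Real.rpow_one]
  rw [show (2-2*H-1 : ℝ) = -(2 + (H-3/2) + (H-3/2)) by ring,
    Real.rpow_neg hv.le, Real.rpow_add hv, Real.rpow_add hv,
    show ((2:ℝ)) = ((2:ℕ):ℝ) by norm_num, Real.rpow_natCast]
  have hZ : (0:ℝ) < (1-u) ^ (H-3/2) := Real.rpow_pos_of_pos hv _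
  have h2 : (0:ℝ) < (1-u)^(2:ℕ) := by positivity
  field_simp

lemma aux_deriv {d : ℝ} : ∀ u ∈ Set.Ioo (0:ℝ) 1,
    HasDerivWithinAt (fun u : ℝ => d * u / (1 - u)) (d / (1-u)^2) (Set.Ioo (0:ℝ) 1) u := by
  intro u hu
  have hv : (1:ℝ) - u ≠ 0 := by have := hu.2; intro h; linarith [hu.2, h]
  have h1 : HasDerivAt (fun u : ℝ => d * u) d u := by
    simpa using (hasDerivAt_id u).const_mul d
  have h2 : HasDerivAt (fun u : ℝ => 1 - u) (-1) u := by
    simpa using ((hasDerivAt_id u).const_sub 1)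
  have := (h1.div h2 hv)
  refine HasDerivWithinAt.congr_deriv this.hasDerivWithinAt ?_
  ring

lemma aux_inj {d : ℝ} (hd : 0 < d) :
    Set.InjOn (fun u : ℝ => d * u / (1 - u)) (Set.Ioo (0:ℝ) 1) := by
  intro x hx y hy hxy
  have hx' : (0:ℝ) < 1 - x := by linarith [hx.2]
  have hy' : (0:ℝ) < 1 - y := by linarith [hy.2]
  simp only at hxy
  have : d * x * (1 - y) = d * y * (1 - x) := by
    field_simp at hxy; linear_combination d * hxy
  nlinarith [this]

lemma aux_img {d : ℝ} (hd : 0 < d) :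
    (fun u : ℝ => d * u / (1 - u)) '' Set.Ioo (0:ℝ) 1 = Set.Ioi (0:ℝ) := by
  ext τ
  constructor
  · rintro ⟨u, hu, rfl⟩
    have h1u : (0:ℝ) < 1 - u := by linarith [hu.2]
    have hu0 : (0:ℝ) < u := hu.1
    exact div_pos (by positivity) h1u
  · intro hτ
    have hτ' : (0:ℝ) < τ := hτ
    refine ⟨τ / (d + τ), ⟨by positivity, ?_⟩, ?_⟩
    · rw [div_lt_one (by positivity)]; linarith
    · have hdt : d + τ ≠ 0 := by positivity
      field_simp
      rw [add_sub_cancel_right, div_self hd.ne']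

lemma betaIntegrand_integrableOn {a b : ℝ} (ha : -1 < a) (hb : -1 < b) :
    MeasureTheory.IntegrableOn (fun u : ℝ => u ^ a * (1 - u) ^ b) (Set.Ioo (0:ℝ) 1) := by
  have hc := Complex.betaIntegral_convergent (u := (a+1 : ℝ)) (v := (b+1 : ℝ))
    (by simpa using show (0:ℝ) < a + 1 by linarith) (by simpa using show (0:ℝ) < b + 1 by linarith)
  have hIoc : MeasureTheory.IntegrableOn
      (fun x : ℝ => (x:ℂ) ^ (a:ℂ) * (1-(x:ℂ)) ^ ((b:ℝ):ℂ)) (Set.Ioc (0:ℝ) 1) := by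
    have := (intervalIntegrable_iff_integrableOn_Ioc_of_le (by norm_num : (0:ℝ) ≤ 1)).1 hc
    simpa using this
  have hnorm := hIoc.norm
  refine (MeasureTheory.IntegrableOn.mono_set hnorm Set.Ioo_subset_Ioc_self).congr_fun ?_
    measurableSet_Ioo
  intro x hx
  obtain ⟨hx0, hx1⟩ := hx
  have h1x : 0 < 1 - x := by linarith
  simp only [norm_mul]
  rw [Complex.norm_cpow_eq_rpow_re_of_pos hx0, show (1:ℂ) - (x:ℂ) = ((1-x:ℝ):ℂ) by push_cast; ring,
    Complex.norm_cpow_eq_rpow_re_of_pos h1x]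
  simp

lemma subst_integrable {H d : ℝ} (hH : H ∈ Set.Ioo (1/2:ℝ) 1) (hd : 0 < d) :
    MeasureTheory.IntegrableOn (fun τ : ℝ => τ ^ (H-3/2) * (d+τ) ^ (H-3/2)) (Set.Ioi (0:ℝ)) := by
  rw [← aux_img hd,
    MeasureTheory.integrableOn_image_iff_integrableOn_abs_deriv_smul measurableSet_Ioo
      aux_deriv (aux_inj hd)]
  have hint : MeasureTheory.IntegrableOn
      (fun u : ℝ => d^(2*H-2) * (u^(H-1/2-1)*(1-u)^(2-2*H-1))) (Set.Ioo (0:ℝ) 1) :=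
    (betaIntegrand_integrableOn (a := H-1/2-1) (b := 2-2*H-1)
      (by linarith [hH.1]) (by linarith [hH.2])).const_mul _
  refine hint.congr_fun (fun u hu => ?_) measurableSet_Ioo
  rw [smul_eq_mul, aux_calc hd hu]

lemma subst_value {H d : ℝ} (hd : 0 < d) :
    ∫ τ in Set.Ioi (0:ℝ), τ ^ (H-3/2) * (d+τ) ^ (H-3/2) =
      d ^ (2*H-2) * betaFn (H-1/2) (2-2*H) := by
  rw [← aux_img hd,
    MeasureTheory.integral_image_eq_integral_abs_deriv_smul measurableSet_Ioo
      aux_deriv (aux_inj hd)]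
  rw [MeasureTheory.setIntegral_congr_fun measurableSet_Ioo
    (fun u hu => by rw [smul_eq_mul, aux_calc hd hu] :
      Set.EqOn _ (fun u : ℝ => d^(2*H-2) * (u^(H-1/2-1)*(1-u)^(2-2*H-1))) (Set.Ioo (0:ℝ) 1))]
  rw [MeasureTheory.integral_const_mul]
  rfl

lemma betaFn_nonneg {x y : ℝ} : 0 ≤ betaFn x y := by
  refine MeasureTheory.setIntegral_nonneg measurableSet_Ioo fun u hu => ?_
  exact mul_nonneg (Real.rpow_nonneg hu.1.le _) (Real.rpow_nonneg (by linarith [hu.2]) _)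

lemma phi_le {H lam s r : ℝ} (hH : H ∈ Set.Ioo (1/2:ℝ) 1) (hlam : 0 < lam) (hsr : s ≠ r) :
    tfbmPhi H lam s r ≤
      (H-1/2)^2 * (|r - s| ^ (2*H-2) * betaFn (H-1/2) (2-2*H)) := by
  have hd : (0:ℝ) < |r - s| := abs_pos.2 (sub_ne_zero_of_ne (Ne.symm hsr))
  have hB : 0 ≤ betaFn (H-1/2) (2-2*H) := betaFn_nonneg
  have hRHS : 0 ≤ (H-1/2)^2 * (|r - s| ^ (2*H-2) * betaFn (H-1/2) (2-2*H)) := by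
    have := Real.rpow_nonneg (abs_nonneg (r - s)) (2*H-2)
    positivity
  unfold tfbmPhi
  set I2 : ℝ := ∫ τ in Set.Ioi (0 : ℝ),
      τ ^ (H - 1 / 2) * (|r - s| + τ) ^ (H - 1 / 2) *
        Real.exp (-lam * τ - lam * (|r - s| + τ)) with hI2def
  have hI2 : 0 ≤ I2 := by
    refine MeasureTheory.setIntegral_nonneg measurableSet_Ioi fun τ hτ => ?_
    have hτ0 : (0:ℝ) < τ := hτ
    exact mul_nonneg (mul_nonneg (Real.rpow_nonneg hτ0.le _)
      (Real.rpow_nonneg (by positivity) _)) (Real.exp_nonneg _)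
  have hc : 0 ≤ lam ^ 2 * I2 := by positivity
  by_cases hInt : MeasureTheory.Integrable
      (fun τ : ℝ => τ ^ (H - 3 / 2) * (|r - s| + τ) ^ (H - 3 / 2) *
        Real.exp (-lam * τ - lam * (|r - s| + τ)) - lam ^ 2 * I2)
      (MeasureTheory.volume.restrict (Set.Ioi (0:ℝ)))
  · -- the integrand is integrable; compare with the dominating function
    have hg := subst_integrable hH hd
    have hfmeas : MeasureTheory.AEStronglyMeasurable
        (fun τ : ℝ => τ ^ (H - 3 / 2) * (|r - s| + τ) ^ (H - 3 / 2) *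
          Real.exp (-lam * τ - lam * (|r - s| + τ)))
        (MeasureTheory.volume.restrict (Set.Ioi (0:ℝ))) := by
      refine Measurable.aestronglyMeasurable ?_
      fun_prop
    have hf : MeasureTheory.IntegrableOn
        (fun τ : ℝ => τ ^ (H - 3 / 2) * (|r - s| + τ) ^ (H - 3 / 2) *
          Real.exp (-lam * τ - lam * (|r - s| + τ))) (Set.Ioi (0:ℝ)) := by
      refine MeasureTheory.Integrable.mono hg hfmeas ?_
      refine (MeasureTheory.ae_restrict_mem measurableSet_Ioi).mono fun τ hτ => ?_
      have hτ0 : (0:ℝ) < τ := hτ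
      have hprod : (0:ℝ) ≤ τ ^ (H - 3/2) * (|r - s| + τ) ^ (H - 3/2) :=
        mul_nonneg (Real.rpow_nonneg hτ0.le _) (Real.rpow_nonneg (by positivity) _)
      have hexp : Real.exp (-lam * τ - lam * (|r - s| + τ)) ≤ 1 := by
        rw [Real.exp_le_one_iff]
        nlinarith [abs_nonneg (r - s)]
      rw [Real.norm_eq_abs, Real.norm_eq_abs, abs_of_nonneg
        (mul_nonneg hprod (Real.exp_nonneg _)), abs_of_nonneg hprod]
      calc τ ^ (H - 3/2) * (|r - s| + τ) ^ (H - 3/2) *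
            Real.exp (-lam * τ - lam * (|r - s| + τ))
          ≤ τ ^ (H - 3/2) * (|r - s| + τ) ^ (H - 3/2) * 1 :=
            mul_le_mul_of_nonneg_left hexp hprod
        _ = τ ^ (H - 3/2) * (|r - s| + τ) ^ (H - 3/2) := by ring
    have h1 : (∫ τ in Set.Ioi (0:ℝ),
        (τ ^ (H - 3 / 2) * (|r - s| + τ) ^ (H - 3 / 2) *
          Real.exp (-lam * τ - lam * (|r - s| + τ)) - lam ^ 2 * I2))
        ≤ ∫ τ in Set.Ioi (0:ℝ),
          τ ^ (H - 3 / 2) * (|r - s| + τ) ^ (H - 3 / 2) *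
            Real.exp (-lam * τ - lam * (|r - s| + τ)) := by
      refine MeasureTheory.integral_mono_ae hInt hf (Filter.Eventually.of_forall fun τ => ?_)
      exact sub_le_self _ hc
    have h2 : (∫ τ in Set.Ioi (0:ℝ),
        τ ^ (H - 3 / 2) * (|r - s| + τ) ^ (H - 3 / 2) *
          Real.exp (-lam * τ - lam * (|r - s| + τ)))
        ≤ ∫ τ in Set.Ioi (0:ℝ), τ ^ (H-3/2) * (|r - s| + τ) ^ (H-3/2) := by
      refine MeasureTheory.integral_mono_of_nonneg ?_ hg ?_
      · refine (MeasureTheory.ae_restrict_mem measurableSet_Ioi).mono fun τ hτ => ?_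
        have hτ0 : (0:ℝ) < τ := hτ
        exact mul_nonneg (mul_nonneg (Real.rpow_nonneg hτ0.le _)
          (Real.rpow_nonneg (by positivity) _)) (Real.exp_nonneg _)
      · refine (MeasureTheory.ae_restrict_mem measurableSet_Ioi).mono fun τ hτ => ?_
        have hτ0 : (0:ℝ) < τ := hτ
        have hprod : (0:ℝ) ≤ τ ^ (H - 3/2) * (|r - s| + τ) ^ (H - 3/2) :=
          mul_nonneg (Real.rpow_nonneg hτ0.le _) (Real.rpow_nonneg (by positivity) _)
        have hexp : Real.exp (-lam * τ - lam * (|r - s| + τ)) ≤ 1 := by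
          rw [Real.exp_le_one_iff]
          nlinarith [abs_nonneg (r - s)]
        calc τ ^ (H - 3/2) * (|r - s| + τ) ^ (H - 3/2) *
              Real.exp (-lam * τ - lam * (|r - s| + τ))
            ≤ τ ^ (H - 3/2) * (|r - s| + τ) ^ (H - 3/2) * 1 :=
              mul_le_mul_of_nonneg_left hexp hprod
          _ = τ ^ (H - 3/2) * (|r - s| + τ) ^ (H - 3/2) := by ring
    have h3 := subst_value (H := H) hd
    refine mul_le_mul_of_nonneg_left ?_ (sq_nonneg _)
    exact h1.trans (h2.trans_eq h3)
  · -- the integrand is not integrable, so the integral is zero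
    rw [MeasureTheory.integral_undef hInt, mul_zero]
    exact hRHS

/-- For `α ∈ (1/2,1)`, `ϱ > 0`, `H ∈ (1/2,1)`, `λ > 0` and `t ≥ 0`,
`∫₀^t∫₀^t a(t,s) a(t,r) φ_{H,λ}(s,r) ds dr ≤ (H-1/2)² B(H-1/2, 2-2H) M_{ϱ,α,H} / Γ(α)²`. -/
theorem caputo_tfbm_double_integral_bound (α ϱ H lam t : ℝ)
    (hα : α ∈ Set.Ioo (1 / 2 : ℝ) 1) (hϱ : 0 < ϱ)
    (hH : H ∈ Set.Ioo (1 / 2 : ℝ) 1) (hlam : 0 < lam) (ht : 0 ≤ t) :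
    (∫⁻ s in Set.Ioo (0 : ℝ) t, ∫⁻ r in Set.Ioo (0 : ℝ) t,
        ENNReal.ofReal (caputoKernel α ϱ t s * caputoKernel α ϱ t r * tfbmPhi H lam s r))
      ≤ ENNReal.ofReal
            ((H - 1 / 2) ^ 2 * betaFn (H - 1 / 2) (2 - 2 * H) / Real.Gamma α ^ 2) *
          ∫⁻ s in Set.Ioi (0 : ℝ), ∫⁻ r in Set.Ioi (0 : ℝ),
            ENNReal.ofReal
              (Real.exp (-ϱ * s) * Real.exp (-ϱ * r) * s ^ (α - 1) * r ^ (α - 1) *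
                |s - r| ^ (2 * H - 2)) := by
  have hΓ : 0 < Real.Gamma α := Real.Gamma_pos_of_pos (by linarith [hα.1])
  set C0 : ℝ := (H - 1/2) ^ 2 * betaFn (H - 1/2) (2 - 2*H) / Real.Gamma α ^ 2 with hC0def
  have hC0 : 0 ≤ C0 := by
    have := betaFn_nonneg (x := H - 1/2) (y := 2 - 2*H)
    positivity
  set K : ℝ → ℝ → ℝ := fun x y =>
    Real.exp (-ϱ * x) * Real.exp (-ϱ * y) * x ^ (α - 1) * y ^ (α - 1) * |x - y| ^ (2*H - 2)
    with hK
  -- Step A: pointwise bound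
  have stepA : ∀ s ∈ Set.Ioo (0:ℝ) t, ∀ r ∈ Set.Ioo (0:ℝ) t, r ≠ s →
      caputoKernel α ϱ t s * caputoKernel α ϱ t r * tfbmPhi H lam s r
        ≤ C0 * K (t - s) (t - r) := by
    intro s hs r hr hrs
    have hts : 0 < t - s := by linarith [hs.2]
    have htr : 0 < t - r := by linarith [hr.2]
    have hphi := phi_le (s := s) (r := r) hH hlam (Ne.symm hrs)
    have haa : 0 ≤ caputoKernel α ϱ t s * caputoKernel α ϱ t r := by
      unfold caputoKernel
      have := Real.rpow_nonneg hts.le (α - 1)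
      have := Real.rpow_nonneg htr.le (α - 1)
      positivity
    calc caputoKernel α ϱ t s * caputoKernel α ϱ t r * tfbmPhi H lam s r
        ≤ caputoKernel α ϱ t s * caputoKernel α ϱ t r *
            ((H-1/2)^2 * (|r - s| ^ (2*H-2) * betaFn (H-1/2) (2-2*H))) :=
          mul_le_mul_of_nonneg_left hphi haa
      _ = C0 * K (t - s) (t - r) := by
          unfold caputoKernel
          rw [hK]
          simp only []
          rw [show (t - s) - (t - r) = r - s by ring, hC0def]
          field_simp
  -- Step B: bound the double integral by the integral of the bound
  have stepB : (∫⁻ s in Set.Ioo (0 : ℝ) t, ∫⁻ r in Set.Ioo (0 : ℝ) t,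
        ENNReal.ofReal (caputoKernel α ϱ t s * caputoKernel α ϱ t r * tfbmPhi H lam s r))
      ≤ ∫⁻ s in Set.Ioo (0 : ℝ) t, ∫⁻ r in Set.Ioo (0 : ℝ) t,
        ENNReal.ofReal (C0 * K (t - s) (t - r)) := by
    refine MeasureTheory.lintegral_mono_ae ?_
    refine (MeasureTheory.ae_restrict_mem measurableSet_Ioo).mono fun s hs => ?_
    refine MeasureTheory.lintegral_mono_ae ?_
    have hne : ∀ᵐ r ∂(volume.restrict (Set.Ioo (0:ℝ) t)), r ≠ s := by
      refine MeasureTheory.ae_iff.2 ?_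
      have hset : {r : ℝ | ¬ r ≠ s} = {s} := by ext r; simp
      rw [hset, MeasureTheory.Measure.restrict_apply (measurableSet_singleton s)]
      exact MeasureTheory.measure_mono_null Set.inter_subset_left
        (MeasureTheory.measure_singleton s)
    refine (hne.and (MeasureTheory.ae_restrict_mem measurableSet_Ioo)).mono
      fun r ⟨hrs, hr⟩ => ?_
    exact ENNReal.ofReal_le_ofReal (stepA s hs r hr hrs)
  -- Step C: change of variables s ↦ t - s, r ↦ t - r
  have hpre : (fun r : ℝ => t - r) ⁻¹' (Set.Ioo 0 t) = Set.Ioo 0 t := by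
    ext r
    simp only [Set.mem_preimage, Set.mem_Ioo]
    constructor <;> rintro ⟨h1, h2⟩ <;> constructor <;> linarith
  have hmp : MeasurePreserving (fun r : ℝ => t - r) volume volume := by
    have h1 := Measure.measurePreserving_neg (volume : Measure ℝ)
    have h2 := MeasureTheory.measurePreserving_add_left (volume : Measure ℝ) t
    simpa [Function.comp_def, sub_eq_add_neg] using h2.comp h1
  have hemb : MeasurableEmbedding (fun r : ℝ => t - r) :=
    (MeasurableEquiv.subLeft t).measurableEmbedding
  have inner_eq : ∀ x : ℝ, (∫⁻ r in Set.Ioo (0 : ℝ) t, ENNReal.ofReal (C0 * K x (t - r)))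
      = ∫⁻ r in Set.Ioo (0 : ℝ) t, ENNReal.ofReal (C0 * K x r) := by
    intro x
    have h := hmp.setLIntegral_comp_preimage_emb hemb
      (fun r => ENNReal.ofReal (C0 * K x r)) (Set.Ioo 0 t)
    rw [hpre] at h
    exact h
  have stepC : (∫⁻ s in Set.Ioo (0 : ℝ) t, ∫⁻ r in Set.Ioo (0 : ℝ) t,
        ENNReal.ofReal (C0 * K (t - s) (t - r)))
      = ∫⁻ s in Set.Ioo (0 : ℝ) t, ∫⁻ r in Set.Ioo (0 : ℝ) t,
        ENNReal.ofReal (C0 * K s r) := by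
    calc (∫⁻ s in Set.Ioo (0 : ℝ) t, ∫⁻ r in Set.Ioo (0 : ℝ) t,
          ENNReal.ofReal (C0 * K (t - s) (t - r)))
        = ∫⁻ s in Set.Ioo (0 : ℝ) t,
            (fun x => ∫⁻ r in Set.Ioo (0 : ℝ) t, ENNReal.ofReal (C0 * K x r)) (t - s) :=
          MeasureTheory.lintegral_congr fun s => inner_eq (t - s)
      _ = ∫⁻ s in Set.Ioo (0 : ℝ) t, ∫⁻ r in Set.Ioo (0 : ℝ) t,
            ENNReal.ofReal (C0 * K s r) := by
          have h := hmp.setLIntegral_comp_preimage_emb hemb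
            (fun x => ∫⁻ r in Set.Ioo (0 : ℝ) t, ENNReal.ofReal (C0 * K x r)) (Set.Ioo 0 t)
          rw [hpre] at h
          exact h
  -- Step D: enlarge the domain
  have stepD : (∫⁻ s in Set.Ioo (0 : ℝ) t, ∫⁻ r in Set.Ioo (0 : ℝ) t,
        ENNReal.ofReal (C0 * K s r))
      ≤ ∫⁻ s in Set.Ioi (0 : ℝ), ∫⁻ r in Set.Ioi (0 : ℝ),
        ENNReal.ofReal (C0 * K s r) := by
    have hsub : Set.Ioo (0:ℝ) t ⊆ Set.Ioi (0:ℝ) := Set.Ioo_subset_Ioi_self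
    calc (∫⁻ s in Set.Ioo (0 : ℝ) t, ∫⁻ r in Set.Ioo (0 : ℝ) t,
          ENNReal.ofReal (C0 * K s r))
        ≤ ∫⁻ s in Set.Ioo (0 : ℝ) t, ∫⁻ r in Set.Ioi (0 : ℝ),
            ENNReal.ofReal (C0 * K s r) :=
          MeasureTheory.lintegral_mono fun s =>
            MeasureTheory.lintegral_mono' (Measure.restrict_mono hsub le_rfl) le_rfl
      _ ≤ ∫⁻ s in Set.Ioi (0 : ℝ), ∫⁻ r in Set.Ioi (0 : ℝ),
            ENNReal.ofReal (C0 * K s r) :=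
          MeasureTheory.lintegral_mono' (Measure.restrict_mono hsub le_rfl) le_rfl
  -- Step E: pull out the constant
  have stepE : (∫⁻ s in Set.Ioi (0 : ℝ), ∫⁻ r in Set.Ioi (0 : ℝ),
        ENNReal.ofReal (C0 * K s r))
      = ENNReal.ofReal C0 *
          ∫⁻ s in Set.Ioi (0 : ℝ), ∫⁻ r in Set.Ioi (0 : ℝ), ENNReal.ofReal (K s r) := by
    simp_rw [ENNReal.ofReal_mul hC0]
    rw [← MeasureTheory.lintegral_const_mul' _ _ ENNReal.ofReal_ne_top]
    refine MeasureTheory.lintegral_congr fun s => ?_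
    rw [← MeasureTheory.lintegral_const_mul' _ _ ENNReal.ofReal_ne_top]
  calc (∫⁻ s in Set.Ioo (0 : ℝ) t, ∫⁻ r in Set.Ioo (0 : ℝ) t,
        ENNReal.ofReal (caputoKernel α ϱ t s * caputoKernel α ϱ t r * tfbmPhi H lam s r))
      ≤ ∫⁻ s in Set.Ioo (0 : ℝ) t, ∫⁻ r in Set.Ioo (0 : ℝ) t,
          ENNReal.ofReal (C0 * K (t - s) (t - r)) := stepB
    _ = ∫⁻ s in Set.Ioo (0 : ℝ) t, ∫⁻ r in Set.Ioo (0 : ℝ) t,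
          ENNReal.ofReal (C0 * K s r) := stepC
    _ ≤ ∫⁻ s in Set.Ioi (0 : ℝ), ∫⁻ r in Set.Ioi (0 : ℝ),
          ENNReal.ofReal (C0 * K s r) := stepD
    _ = ENNReal.ofReal C0 *
          ∫⁻ s in Set.Ioi (0 : ℝ), ∫⁻ r in Set.Ioi (0 : ℝ), ENNReal.ofReal (K s r) := stepE
    _ = _ := rfl
end
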